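/- Let g be a finite-dimensional two-step solvable Lie algebra over a field of characteristic zero and set n = g/g^∞. If n admits an LR-structure with n·n ⊆ [n,n], then g admits an LR-structure (given on g = g^∞ ⋊ n by (a,x)⋆(b,y) = ([x,b], x·y)). -/

import Mathlib

/-!
Write `I = g^∞` and `n = g/I`. Since `[g, I] = I ⊆ [g, g]` and `[[g, g], [g, g]] = 0`, the ideal
`I` is abelian and `[g, g]` acts trivially on it, so the adjoint action makes `I` a module over the
nilpotent Lie algebra `n`, acting through commuting operators `ρ x`, with `n · I = I`. Nakayama's
lemma over the commutative algebra generated by the `ρ x` writes `1 = ∑ F u * ρ u` with every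
`F u` commuting with the action. Contracting a 2-cocycle `c` with this identity is a homotopy:
`c = d (h c) + R c`, where `R c` is again a cocycle and `R c x y` only involves `c ⁅u, x⁆ y` and
`c x ⁅u, y⁆`. As `n` is nilpotent, `R^[m] c = 0` for large `m`. Hence `H²(n, I) = 0`, and
`0 → I → g → n → 0` splits by a Lie algebra map `σ`.

On `g = I ⋊ σ(n)` the product `(a, x) ⋆ (b, y) = ([x, b], x · y)` is an LR-structure: left
symmetry reduces to `[[x, y], b] = 0`, right symmetry to `[[g, g], I] = 0` together with
`n · n ⊆ [n, n]`, and compatibility with the bracket to `[I, I] = 0`.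
-/

open LieModule LieAlgebra

structure IsLRStructure {k L : Type*} [CommRing k] [LieRing L] [LieAlgebra k L]
    (mul : L →ₗ[k] L →ₗ[k] L) : Prop where
  left_comm : ∀ x y z, mul x (mul y z) = mul y (mul x z)
  right_comm : ∀ x y z, mul (mul x y) z = mul (mul x z) y
  sub_comm : ∀ x y, mul x y - mul y x = ⁅x, y⁆

section DerivedAndLowerCentralSeries

variable {k L : Type*} [CommRing k] [LieRing L] [LieAlgebra k L]

lemma lie_mem_derivedSeries_one (u v : L) : ⁅u, v⁆ ∈ derivedSeries k L 1 := by
  have : ⁅u, v⁆ ∈ Submodule.span k {⁅x, y⁆ | (x : L) (y : L)} := Submodule.subset_span ⟨u, v, rfl⟩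
  rwa [← coe_derivedSeries_one_eq] at this

lemma eq_zero_of_mem_derivedSeries_one {M : Type*} [AddCommGroup M] [Module k M] (f : L →ₗ[k] M)
    (hf : ∀ a b : L, f ⁅a, b⁆ = 0) {x : L} (hx : x ∈ derivedSeries k L 1) : f x = 0 := by
  have hx' : x ∈ Submodule.span k {⁅x, y⁆ | (x : L) (y : L)} := coe_derivedSeries_one_eq k L ▸ hx
  refine (Submodule.span_le (p := LinearMap.ker f)).mpr ?_ hx'
  rintro _ ⟨a, b, rfl⟩
  exact hf a b

lemma derivedSeries_two_eq_bot (h2 : ∀ a b c d : L, ⁅⁅a, b⁆, ⁅c, d⁆⁆ = 0) :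
    derivedSeries k L 2 = ⊥ := by
  rw [derivedSeries_def, derivedSeriesOfIdeal_succ, ← derivedSeries_def,
    LieSubmodule.lie_eq_bot_iff]
  intro x hx y hy
  have hy' : ∀ a b : L, ⁅y, ⁅a, b⁆⁆ = 0 := fun a b => by
    rw [← lie_skew, neg_eq_zero]
    simpa using eq_zero_of_mem_derivedSeries_one (ad k L ⁅a, b⁆) (h2 a b) hy
  rw [← lie_skew, neg_eq_zero]
  simpa using eq_zero_of_mem_derivedSeries_one (ad k L y) hy' hx

lemma le_derivedSeries_one_of_lie_top_eq {I : LieIdeal k L} (hI : ⁅(⊤ : LieIdeal k L), I⁆ = I) :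
    I ≤ derivedSeries k L 1 := by
  rw [← hI]
  exact LieSubmodule.mono_lie_right ⊤ le_top

lemma lie_top_iInf_lowerCentralSeries {M : Type*} [AddCommGroup M] [Module k M]
    [LieRingModule L M] [LieModule k L M] [IsArtinian k M] :
    ⁅(⊤ : LieIdeal k L), ⨅ i, lowerCentralSeries k L M i⁆ = ⨅ i, lowerCentralSeries k L M i := by
  obtain ⟨N, hN⟩ := Filter.eventually_atTop.mp (eventually_iInf_lowerCentralSeries_eq k L M)
  rw [hN N le_rfl, ← lowerCentralSeries_succ, ← hN (N + 1) N.le_succ, hN N le_rfl]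

lemma isNilpotent_quotient_iInf_lowerCentralSeries [IsArtinian k L] :
    LieRing.IsNilpotent (L ⧸ ⨅ i, lowerCentralSeries k L L i) := by
  set I := ⨅ i, lowerCentralSeries k L L i
  obtain ⟨N, hN⟩ := Filter.eventually_atTop.mp (eventually_iInf_lowerCentralSeries_eq k L L)
  have : LieModule.IsNilpotent L (L ⧸ I) :=
    (isNilpotent_quotient_iff k L L I).mpr ⟨N, (hN N le_rfl).ge⟩
  let π : L →ₗ⁅k⁆ L ⧸ I := { LieSubmodule.Quotient.mk' I with map_lie' := rfl }
  exact Function.Surjective.lieModuleIsNilpotent (f := π) (g := LinearMap.id)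
    (fun _ _ => rfl) (LieSubmodule.Quotient.surjective_mk' I) Function.surjective_id

end DerivedAndLowerCentralSeries

open scoped IsMulCommutative in
theorem Module.End.exists_sum_mul_eq_one_of_iSup_range_eq_top {R M ι : Type*} [CommRing R]
    [AddCommGroup M] [Module R M] [Module.Finite R M] (T : ι → Module.End R M)
    (hT : ∀ i j, Commute (T i) (T j)) (hspan : ⨆ i, LinearMap.range (T i) = ⊤) :
    ∃ (s : Finset ι) (F : ι → Module.End R M),
      (∀ i j, Commute (F i) (T j)) ∧ ∑ i ∈ s, F i * T i = 1 := by
  let A := Algebra.adjoin R (Set.range T)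
  have : IsMulCommutative A := Algebra.isMulCommutative_adjoin R <| by
    rintro _ ⟨i, rfl⟩ _ ⟨j, rfl⟩
    exact hT i j
  let t : ι → A := fun i => ⟨T i, Algebra.subset_adjoin ⟨i, rfl⟩⟩
  let J : Ideal A := Ideal.span (Set.range t)
  have := Module.Finite.of_restrictScalars_finite R A M
  have hle : (⊤ : Submodule A M) ≤ J • ⊤ := by
    intro m _
    have hm : m ∈ ⨆ i, LinearMap.range (T i) := hspan ▸ Submodule.mem_top
    refine (iSup_le (ι := ι) (a := (J • ⊤ : Submodule A M).restrictScalars R) ?_) hm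
    rintro i _ ⟨m, rfl⟩
    exact (Submodule.smul_mem_smul (Ideal.subset_span ⟨i, rfl⟩) Submodule.mem_top :
      t i • m ∈ J • (⊤ : Submodule A M))
  obtain ⟨r, hr1, hr0⟩ := Submodule.exists_sub_one_mem_and_smul_eq_zero_of_fg_of_le_smul J ⊤
    Module.Finite.fg_top hle
  obtain ⟨c, hc⟩ := Finsupp.mem_span_range_iff_exists_finsupp.mp (neg_mem hr1)
  refine ⟨c.support, fun i => c i, fun i j => congrArg Subtype.val (mul_comm (c i) (t j)), ?_⟩
  have hsum : ((c.sum fun i a => a • t i : A) : Module.End R M) = ∑ i ∈ c.support, c i * T i := by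
    simp [Finsupp.sum, t]
  ext m
  rw [← hsum, hc]
  change (-(r - 1)) • m = m
  rw [neg_sub, sub_smul, one_smul, hr0 m Submodule.mem_top, sub_zero]

namespace TwoCochain

variable {k n M : Type*} [CommRing k] [LieRing n] [LieAlgebra k n] [AddCommGroup M] [Module k M]
  (ρ : n →ₗ[k] Module.End k M)

def differential (c : n →ₗ[k] n →ₗ[k] M) (x y z : n) : M :=
  ρ x (c y z) - ρ y (c x z) + ρ z (c x y) - c ⁅x, y⁆ z + c ⁅x, z⁆ y - c ⁅y, z⁆ x

def IsCocycle (c : n →ₗ[k] n →ₗ[k] M) : Prop :=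
  ∀ x y z, differential ρ c x y z = 0

def adDeriv (u : n) (c : n →ₗ[k] n →ₗ[k] M) : n →ₗ[k] n →ₗ[k] M :=
  c ∘ₗ ad k n u + c.compl₂ (ad k n u)

@[simp]
lemma adDeriv_apply (u : n) (c : n →ₗ[k] n →ₗ[k] M) (x y : n) :
    adDeriv u c x y = c ⁅u, x⁆ y + c x ⁅u, y⁆ := by
  simp [adDeriv]

lemma differential_adDeriv (hρ : ∀ x y : n, ρ ⁅x, y⁆ = 0) (u : n) (c : n →ₗ[k] n →ₗ[k] M)
    (x y z : n) : differential ρ (adDeriv u c) x y z =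
      differential ρ c ⁅u, x⁆ y z + differential ρ c x ⁅u, y⁆ z + differential ρ c x y ⁅u, z⁆ := by
  simp only [differential, adDeriv_apply, lie_lie, map_sub, map_add, LinearMap.sub_apply, hρ,
    LinearMap.zero_apply]
  abel

variable (s : Finset n) (F : n → Module.End k M)

def homotopy (c : n →ₗ[k] n →ₗ[k] M) : n →ₗ[k] M :=
  ∑ u ∈ s, F u ∘ₗ c u

def homotopyError (c : n →ₗ[k] n →ₗ[k] M) : n →ₗ[k] n →ₗ[k] M :=
  ∑ u ∈ s, (adDeriv u c).compr₂ (F u)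

@[simp]
lemma homotopy_apply (c : n →ₗ[k] n →ₗ[k] M) (x : n) :
    homotopy s F c x = ∑ u ∈ s, F u (c u x) := by
  simp [homotopy]

@[simp]
lemma homotopyError_apply (c : n →ₗ[k] n →ₗ[k] M) (x y : n) :
    homotopyError s F c x y = ∑ u ∈ s, F u (c ⁅u, x⁆ y + c x ⁅u, y⁆) := by
  simp [homotopyError]

variable {ρ s F}

lemma isAlt_homotopyError {c : n →ₗ[k] n →ₗ[k] M} (hc : c.IsAlt) :
    (homotopyError s F c).IsAlt := by
  intro x
  simp [← hc.neg x]

lemma isCocycle_homotopyError (hρ : ∀ x y : n, ρ ⁅x, y⁆ = 0) (hF : ∀ u x, Commute (F u) (ρ x))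
    {c : n →ₗ[k] n →ₗ[k] M} (hc : IsCocycle ρ c) : IsCocycle ρ (homotopyError s F c) := by
  intro x y z
  have hcomm : ∀ u x m, ρ x (F u m) = F u (ρ x m) := fun u x m =>
    (LinearMap.congr_fun (hF u x) m).symm
  have : differential ρ (homotopyError s F c) x y z =
      ∑ u ∈ s, F u (differential ρ (adDeriv u c) x y z) := by
    simp only [differential, homotopyError_apply, adDeriv_apply, map_sum, hcomm, map_sub,
      map_add, ← Finset.sum_sub_distrib, ← Finset.sum_add_distrib]
  rw [this]
  simp [differential_adDeriv ρ hρ, hc _ _ _]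

lemma differential_homotopy (hF : ∀ u x, Commute (F u) (ρ x)) (hsum : ∑ u ∈ s, F u * ρ u = 1)
    {c : n →ₗ[k] n →ₗ[k] M} (halt : c.IsAlt) (hc : IsCocycle ρ c) (x y : n) :
    ρ x (homotopy s F c y) - ρ y (homotopy s F c x) - homotopy s F c ⁅x, y⁆ =
      c x y - homotopyError s F c x y := by
  have hcomm : ∀ u x m, ρ x (F u m) = F u (ρ x m) := fun u x m =>
    (LinearMap.congr_fun (hF u x) m).symm
  have hid : c x y = ∑ u ∈ s, F u (ρ u (c x y)) := by
    simpa using (LinearMap.congr_fun hsum (c x y)).symm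
  have hzero : ∑ u ∈ s, F u (differential ρ c u x y) = 0 := by simp [hc _ _ _]
  rw [← sub_zero (c x y - homotopyError s F c x y), ← hzero, hid, homotopyError_apply]
  simp only [homotopy_apply, map_sum, hcomm, ← Finset.sum_sub_distrib, ← map_sub]
  refine Finset.sum_congr rfl fun u _ => congrArg (F u) ?_
  rw [differential, ← halt.neg ⁅u, y⁆ x, ← halt.neg ⁅x, y⁆ u]
  abel

lemma iterate_homotopyError_apply_eq_zero {N : ℕ} (hN : lowerCentralSeries k n n N = ⊥)
    (m : ℕ) (c : n →ₗ[k] n →ₗ[k] M) {p q : ℕ} {x y : n}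
    (hx : x ∈ lowerCentralSeries k n n p) (hy : y ∈ lowerCentralSeries k n n q)
    (hpq : 2 * N ≤ p + q + m) : (homotopyError s F)^[m] c x y = 0 := by
  induction m generalizing p q x y with
  | zero =>
    rcases le_or_gt N p with hp | hq
    · rw [(LieSubmodule.mem_bot x).mp (hN ▸ antitone_lowerCentralSeries k n n hp hx)]
      simp
    · rw [(LieSubmodule.mem_bot y).mp (hN ▸ antitone_lowerCentralSeries k n n (by omega) hy)]
      simp
  | succ m ih =>
    have hsucc : ∀ (u : n) {r z}, z ∈ lowerCentralSeries k n n r →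
        ⁅u, z⁆ ∈ lowerCentralSeries k n n (r + 1) := fun u _ _ hz =>
      lowerCentralSeries_succ k n n _ ▸ LieSubmodule.lie_mem_lie (LieSubmodule.mem_top u) hz
    rw [Function.iterate_succ_apply', homotopyError_apply]
    refine Finset.sum_eq_zero fun u _ => ?_
    rw [ih (hsucc u hx) hy (by omega), ih hx (hsucc u hy) (by omega), add_zero, map_zero]

theorem exists_eq_coboundary [LieRing.IsNilpotent n]
    (hρ : ∀ x y : n, ρ ⁅x, y⁆ = 0) (hF : ∀ u x, Commute (F u) (ρ x))
    (hsum : ∑ u ∈ s, F u * ρ u = 1) {ω : n →ₗ[k] n →ₗ[k] M} (halt : ω.IsAlt)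
    (hω : IsCocycle ρ ω) :
    ∃ φ : n →ₗ[k] M, ∀ x y, ω x y = ρ x (φ y) - ρ y (φ x) - φ ⁅x, y⁆ := by
  obtain ⟨N, hN⟩ := (isNilpotent_iff k n n).mp ‹_›
  let R := homotopyError s F
  have hiter : ∀ m, (R^[m] ω).IsAlt ∧ IsCocycle ρ (R^[m] ω) := by
    intro m
    induction m with
    | zero => exact ⟨halt, hω⟩
    | succ m ih =>
      rw [Function.iterate_succ_apply']
      exact ⟨isAlt_homotopyError ih.1, isCocycle_homotopyError hρ hF ih.2⟩
  refine ⟨∑ m ∈ Finset.range (2 * N), homotopy s F (R^[m] ω), fun x y => ?_⟩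
  have hvanish : R^[2 * N] ω x y = 0 :=
    iterate_homotopyError_apply_eq_zero (p := 0) (q := 0) hN _ ω (by simp) (by simp) (by simp)
  have hstep : ∀ m, homotopyError s F (R^[m] ω) x y = R^[m + 1] ω x y := fun m => by
    rw [Function.iterate_succ_apply']
  simp only [LinearMap.sum_apply, map_sum, ← Finset.sum_sub_distrib,
    differential_homotopy hF hsum (hiter _).1 (hiter _).2, hstep]
  rw [Finset.sum_range_sub' (fun m => R^[m] ω x y), hvanish, Function.iterate_zero_apply,
    sub_zero]

lemma IsCocycle.of_compr₂ {M' : Type*} [AddCommGroup M'] [Module k M']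
    {ρ' : n →ₗ[k] Module.End k M'} {f : M →ₗ[k] M'} (hf : Function.Injective f)
    (hfρ : ∀ x m, f (ρ x m) = ρ' x (f m)) {c : n →ₗ[k] n →ₗ[k] M}
    (hc : IsCocycle ρ' (c.compr₂ f)) : IsCocycle ρ c := by
  intro x y z
  apply hf
  rw [map_zero, ← hc x y z]
  simp [differential, hfρ]

end TwoCochain

section LieDefect

variable {k n g : Type*} [CommRing k] [LieRing n] [LieAlgebra k n] [LieRing g] [LieAlgebra k g]

def lieDefect (σ : n →ₗ[k] g) : n →ₗ[k] n →ₗ[k] g :=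
  (ad k g ∘ₗ σ).compl₂ σ - (ad k n : n →ₗ[k] Module.End k n).compr₂ σ

@[simp]
lemma lieDefect_apply (σ : n →ₗ[k] g) (x y : n) :
    lieDefect σ x y = ⁅σ x, σ y⁆ - σ ⁅x, y⁆ := by
  simp [lieDefect]

lemma isCocycle_lieDefect (σ : n →ₗ[k] g) : TwoCochain.IsCocycle (ad k g ∘ₗ σ) (lieDefect σ) := by
  intro x y z
  have hjac : ⁅⁅x, y⁆, z⁆ - ⁅⁅x, z⁆, y⁆ + ⁅⁅y, z⁆, x⁆ = 0 := by
    rw [← lie_skew ⁅x, z⁆ y, ← lie_skew ⁅y, z⁆ x, leibniz_lie x y z]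
    abel
  replace hjac := congrArg σ hjac
  simp only [map_add, map_sub, map_zero] at hjac
  simp only [TwoCochain.differential, lieDefect_apply, LinearMap.comp_apply,
    LieHom.coe_toLinearMap, ad_apply, lie_sub, leibniz_lie (σ x) (σ y) (σ z)]
  rw [← lie_skew (σ z) ⁅σ x, σ y⁆, ← lie_skew (σ ⁅x, y⁆) (σ z), ← lie_skew (σ ⁅x, z⁆) (σ y),
    ← lie_skew (σ ⁅y, z⁆) (σ x)]
  linear_combination (norm := abel) hjac

lemma lie_sub_apply_eq_of_lieDefect_eq {σ φ : n →ₗ[k] g} (hφ : ∀ x y, ⁅φ x, φ y⁆ = 0)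
    (hdef : ∀ x y, lieDefect σ x y = ⁅σ x, φ y⁆ - ⁅σ y, φ x⁆ - φ ⁅x, y⁆) (x y : n) :
    ⁅(σ - φ) x, (σ - φ) y⁆ = (σ - φ) ⁅x, y⁆ := by
  have h := hdef x y
  rw [lieDefect_apply] at h
  simp only [LinearMap.sub_apply, sub_lie, lie_sub, hφ, ← lie_skew (φ x) (σ y)]
  linear_combination (norm := abel) h

end LieDefect

section QuotientAction

variable {k g : Type*} [CommRing k] [LieRing g] [LieAlgebra k g] {I : LieIdeal k g}

def quotientAction (hI : ⁅I, I⁆ = ⊥) : g ⧸ I →ₗ[k] Module.End k I :=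
  (LieSubmodule.toSubmodule I).liftQ (toEnd k g I) fun a ha =>
    LinearMap.ext fun m => Subtype.ext <| (LieSubmodule.lie_eq_bot_iff I I).mp hI a ha m m.2

lemma coe_quotientAction_apply (hI : ⁅I, I⁆ = ⊥) {x : g ⧸ I} {u : g}
    (hu : LieSubmodule.Quotient.mk' I u = x) (m : I) : (quotientAction hI x m : g) = ⁅u, m⁆ := by
  subst hu
  rfl

lemma iSup_range_quotientAction (hI : ⁅I, I⁆ = ⊥) (htop : ⁅(⊤ : LieIdeal k g), I⁆ = I) :
    ⨆ x, LinearMap.range (quotientAction hI x) = ⊤ := by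
  refine eq_top_iff.mpr fun m _ => ?_
  have hm : (m : g) ∈ LieSubmodule.toSubmodule ⁅(⊤ : LieIdeal k g), I⁆ := by rw [htop]; exact m.2
  rw [LieSubmodule.lieIdeal_oper_eq_linear_span'] at hm
  obtain ⟨m', hm', hmm'⟩ := (Submodule.span_le (p := (⨆ x, LinearMap.range
      (quotientAction hI x)).map (LieSubmodule.toSubmodule I).subtype)).mpr (by
    rintro _ ⟨u, -, b, hb, rfl⟩
    exact ⟨quotientAction hI (LieSubmodule.Quotient.mk' I u) ⟨b, hb⟩,
      Submodule.mem_iSup_of_mem _ (LinearMap.mem_range_self _ _), rfl⟩) hm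
  exact Subtype.ext hmm' ▸ hm'

variable (hcent : ⁅derivedSeries k g 1, I⁆ = ⊥) (hI : ⁅I, I⁆ = ⊥)
include hcent

lemma quotientAction_lie (x y : g ⧸ I) : quotientAction hI ⁅x, y⁆ = 0 := by
  obtain ⟨u, rfl⟩ := LieSubmodule.Quotient.surjective_mk' I x
  obtain ⟨v, rfl⟩ := LieSubmodule.Quotient.surjective_mk' I y
  refine LinearMap.ext fun m => Subtype.ext ?_
  change ⁅⁅u, v⁆, (m : g)⁆ = 0
  exact (LieSubmodule.lie_eq_bot_iff _ _).mp hcent _ (lie_mem_derivedSeries_one u v) m m.2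

lemma commute_quotientAction (x y : g ⧸ I) :
    Commute (quotientAction hI x) (quotientAction hI y) := by
  obtain ⟨u, rfl⟩ := LieSubmodule.Quotient.surjective_mk' I x
  obtain ⟨v, rfl⟩ := LieSubmodule.Quotient.surjective_mk' I y
  refine LinearMap.ext fun m => Subtype.ext ?_
  change ⁅u, ⁅v, (m : g)⁆⁆ = ⁅v, ⁅u, (m : g)⁆⁆
  rw [← sub_eq_zero, ← lie_lie]
  exact (LieSubmodule.lie_eq_bot_iff _ _).mp hcent _ (lie_mem_derivedSeries_one u v) m m.2

end QuotientAction

theorem exists_lieHom_section {k g : Type*} [Field k] [LieRing g] [LieAlgebra k g]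
    (I : LieIdeal k g) [Module.Finite k I] [LieRing.IsNilpotent (g ⧸ I)]
    (htop : ⁅(⊤ : LieIdeal k g), I⁆ = I) (hcent : ⁅derivedSeries k g 1, I⁆ = ⊥) :
    ∃ σ : g ⧸ I →ₗ⁅k⁆ g, ∀ x, LieSubmodule.Quotient.mk' I (σ x) = x := by
  have hID := le_derivedSeries_one_of_lie_top_eq htop
  have hI : ⁅I, I⁆ = ⊥ := eq_bot_iff.mpr <| hcent ▸ LieSubmodule.mono_lie_left _ hID
  set ρ := quotientAction hI
  obtain ⟨s, F, hF, hsum⟩ := Module.End.exists_sum_mul_eq_one_of_iSup_range_eq_top ρ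
    (commute_quotientAction hcent hI) (iSup_range_quotientAction hI htop)
  obtain ⟨s₀, hs₀⟩ := (LieSubmodule.Quotient.mk' I).toLinearMap.exists_rightInverse_of_surjective
    (LinearMap.range_eq_top.mpr (LieSubmodule.Quotient.surjective_mk' I))
  have hs₀x : ∀ x, LieSubmodule.Quotient.mk' I (s₀ x) = x := LinearMap.congr_fun hs₀
  have hmem : ∀ x y, lieDefect s₀ x y ∈ LinearMap.range (LieSubmodule.toSubmodule I).subtype :=
    fun x y => by
      rw [Submodule.range_subtype, LieSubmodule.mem_toSubmodule,
        ← LieSubmodule.Quotient.mk_eq_zero, lieDefect_apply, map_sub]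
      simp only [LieSubmodule.Quotient.mk'_apply] at hs₀x ⊢
      rw [LieSubmodule.Quotient.mk_bracket, hs₀x, hs₀x, hs₀x, sub_self]
  let ω := LinearMap.codRestrict₂ (lieDefect s₀) _ Subtype.val_injective hmem
  have hωcoe : ω.compr₂ (LieSubmodule.toSubmodule I).subtype = lieDefect s₀ := by
    ext x y
    exact LinearMap.codRestrict₂_apply (lieDefect s₀) _ Subtype.val_injective hmem x y
  have hω : TwoCochain.IsCocycle ρ ω :=
    TwoCochain.IsCocycle.of_compr₂ Subtype.val_injective
      (fun x m => coe_quotientAction_apply hI (hs₀x x) m) (hωcoe ▸ isCocycle_lieDefect s₀)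
  obtain ⟨φ, hφ⟩ := TwoCochain.exists_eq_coboundary (quotientAction_lie hcent hI) hF hsum
    (fun x => Subtype.ext <| by simpa using LinearMap.congr_fun₂ hωcoe x x) hω
  let ψ := (LieSubmodule.toSubmodule I).subtype ∘ₗ φ
  have hdef : ∀ x y, lieDefect s₀ x y = ⁅s₀ x, ψ y⁆ - ⁅s₀ y, ψ x⁆ - ψ ⁅x, y⁆ := fun x y => by
    rw [← hωcoe, LinearMap.compr₂_apply, hφ]
    simp [ψ, coe_quotientAction_apply hI (hs₀x _)]
  have hψ : ∀ x y, ⁅ψ x, ψ y⁆ = 0 := fun x y =>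
    (LieSubmodule.lie_eq_bot_iff I I).mp hI _ (φ x).2 _ (φ y).2
  refine ⟨{ toLinearMap := s₀ - ψ
            map_lie' := (lie_sub_apply_eq_of_lieDefect_eq hψ hdef _ _).symm }, fun x => ?_⟩
  change LieSubmodule.Quotient.mk' I (s₀ x - (φ x : g)) = x
  rw [map_sub, (LieSubmodule.Quotient.mk_eq_zero I).mpr (φ x).2, sub_zero, hs₀x]

section SemidirectProduct

variable {k g : Type*} [CommRing k] [LieRing g] [LieAlgebra k g] {I : LieIdeal k g}

/-- Writing `u = a + σ x` and `v = b + σ y` with `a, b ∈ I`, this is `([x, b], x · y)`. -/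
def semidirectMul (σ : g ⧸ I →ₗ⁅k⁆ g) (mul : (g ⧸ I) →ₗ[k] (g ⧸ I) →ₗ[k] (g ⧸ I)) :
    g →ₗ[k] g →ₗ[k] g :=
  let π : g →ₗ[k] g ⧸ I := LieSubmodule.Quotient.mk' I
  (ad k g : g →ₗ[k] Module.End k g).compl₂ (LinearMap.id - σ.toLinearMap ∘ₗ π) +
    (mul.compl₁₂ π π).compr₂ σ.toLinearMap

@[simp]
lemma semidirectMul_apply (σ : g ⧸ I →ₗ⁅k⁆ g) (mul : (g ⧸ I) →ₗ[k] (g ⧸ I) →ₗ[k] (g ⧸ I))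
    (u v : g) : semidirectMul σ mul u v =
      ⁅u, v - σ (LieSubmodule.Quotient.mk' I v)⁆ +
        σ (mul (LieSubmodule.Quotient.mk' I u) (LieSubmodule.Quotient.mk' I v)) := by
  simp [semidirectMul]

variable {σ : g ⧸ I →ₗ⁅k⁆ g} (hσ : ∀ x, LieSubmodule.Quotient.mk' I (σ x) = x)
  {mul : (g ⧸ I) →ₗ[k] (g ⧸ I) →ₗ[k] (g ⧸ I)}
include hσ

lemma sub_section_mem (v : g) : v - σ (LieSubmodule.Quotient.mk' I v) ∈ I := by
  rw [← LieSubmodule.Quotient.mk_eq_zero I, map_sub, hσ, sub_self]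

lemma mk'_semidirectMul (u v : g) :
    LieSubmodule.Quotient.mk' I (semidirectMul σ mul u v) =
      mul (LieSubmodule.Quotient.mk' I u) (LieSubmodule.Quotient.mk' I v) := by
  rw [semidirectMul_apply, map_add, (LieSubmodule.Quotient.mk_eq_zero I).mpr
    (I.lie_mem (sub_section_mem hσ v)), hσ, zero_add]

lemma semidirectMul_sub_section (u v : g) :
    semidirectMul σ mul u v - σ (LieSubmodule.Quotient.mk' I (semidirectMul σ mul u v)) =
      ⁅u, v - σ (LieSubmodule.Quotient.mk' I v)⁆ := by
  rw [mk'_semidirectMul hσ, semidirectMul_apply, add_sub_cancel_right]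

theorem isLRStructure_semidirectMul (hID : I ≤ derivedSeries k g 1)
    (hcent : ⁅derivedSeries k g 1, I⁆ = ⊥) (hmul : IsLRStructure mul)
    (hsub : ∀ x y, mul x y ∈ Submodule.span k {z : g ⧸ I | ∃ a b : g ⧸ I, z = ⁅a, b⁆}) :
    IsLRStructure (semidirectMul σ mul) := by
  set π := LieSubmodule.Quotient.mk' I
  set D := derivedSeries k g 1
  have hDI : ∀ a ∈ D, ∀ b ∈ I, ⁅a, b⁆ = 0 := (LieSubmodule.lie_eq_bot_iff _ _).mp hcent
  have he := sub_section_mem hσ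
  have hmulD : ∀ u v, semidirectMul σ mul u v ∈ D := fun u v => by
    have hσD : σ (mul (π u) (π v)) ∈ D :=
      (Submodule.span_le (p := (LieSubmodule.toSubmodule D).comap σ.toLinearMap)).mpr (by
        rintro _ ⟨a, b, rfl⟩
        change σ ⁅a, b⁆ ∈ D
        rw [σ.map_lie]
        exact lie_mem_derivedSeries_one _ _) (hsub _ _)
    rw [semidirectMul_apply]
    exact D.add_mem (lie_mem_derivedSeries_one _ _) hσD
  refine ⟨fun x y z => ?_, fun x y z => ?_, fun u v => ?_⟩
  · rw [semidirectMul_apply σ mul x (semidirectMul σ mul y z), semidirectMul_sub_section hσ,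
      mk'_semidirectMul hσ, semidirectMul_apply σ mul y (semidirectMul σ mul x z),
      semidirectMul_sub_section hσ, mk'_semidirectMul hσ, hmul.left_comm, leibniz_lie,
      hDI _ (lie_mem_derivedSeries_one x y) _ (he z), zero_add]
  · rw [semidirectMul_apply σ mul (semidirectMul σ mul x y),
      semidirectMul_apply σ mul (semidirectMul σ mul x z), hDI _ (hmulD x y) _ (he z),
      hDI _ (hmulD x z) _ (he y), mk'_semidirectMul hσ, mk'_semidirectMul hσ, hmul.right_comm]
  · have hσuv : σ (mul (π u) (π v)) - σ (mul (π v) (π u)) =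
        ⁅u - (u - σ (π u)), v - (v - σ (π v))⁆ := by
      rw [← map_sub, hmul.sub_comm, σ.map_lie, sub_sub_cancel, sub_sub_cancel]
    have hee : ⁅u - σ (π u), v - σ (π v)⁆ = 0 := hDI _ (hID (he u)) _ (he v)
    rw [semidirectMul_apply, semidirectMul_apply]
    simp only [sub_lie, lie_sub] at hσuv hee ⊢
    rw [← lie_skew v u, ← lie_skew v (σ (π u))]
    linear_combination (norm := abel) hσuv + hee

end SemidirectProduct

theorem lr_lifting_general {k g : Type*} [Field k]
    [LieRing g] [LieAlgebra k g] [FiniteDimensional k g]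
    (h2 : ∀ a b c d : g, ⁅⁅a, b⁆, ⁅c, d⁆⁆ = 0)
    (I : LieIdeal k g) (hI : I = ⨅ i : ℕ, LieModule.lowerCentralSeries k g g i)
    (mul : (g ⧸ I) →ₗ[k] (g ⧸ I) →ₗ[k] (g ⧸ I))
    (hL : ∀ x y z : g ⧸ I, mul x (mul y z) = mul y (mul x z))
    (hR : ∀ x y z : g ⧸ I, mul (mul x y) z = mul (mul x z) y)
    (hcompat : ∀ x y : g ⧸ I, mul x y - mul y x = ⁅x, y⁆)
    (hsub : ∀ x y : g ⧸ I, mul x y ∈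
      Submodule.span k {z : g ⧸ I | ∃ a b : g ⧸ I, z = ⁅a, b⁆}) :
    ∃ mul' : g →ₗ[k] g →ₗ[k] g,
      (∀ x y z : g, mul' x (mul' y z) = mul' y (mul' x z)) ∧
      (∀ x y z : g, mul' (mul' x y) z = mul' (mul' x z) y) ∧
      (∀ x y : g, mul' x y - mul' y x = ⁅x, y⁆) := by
  subst hI
  have htop := lie_top_iInf_lowerCentralSeries (k := k) (L := g) (M := g)
  have := isNilpotent_quotient_iInf_lowerCentralSeries (k := k) (L := g)
  have hID := le_derivedSeries_one_of_lie_top_eq htop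
  have hcent : ⁅derivedSeries k g 1, _⁆ = ⊥ := eq_bot_iff.mpr <|
    (LieSubmodule.mono_lie_right _ hID).trans (derivedSeries_two_eq_bot h2).le
  obtain ⟨σ, hσ⟩ := exists_lieHom_section _ htop hcent
  obtain ⟨hL', hR', hcompat'⟩ :=
    isLRStructure_semidirectMul hσ hID hcent ⟨hL, hR, hcompat⟩ hsub
  exact ⟨_, hL', hR', hcompat'⟩

/-- If `n = g/g^∞` of a finite-dimensional two-step solvable Lie algebra `g`
admits an LR-structure with `n·n ⊆ [n,n]`, then `g` admits an LR-structure. -/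
theorem lr_lifting {k g : Type*} [Field k] [CharZero k]
    [LieRing g] [LieAlgebra k g] [FiniteDimensional k g]
    (h2 : ∀ a b c d : g, ⁅⁅a, b⁆, ⁅c, d⁆⁆ = 0)
    (I : LieIdeal k g) (hI : I = ⨅ i : ℕ, LieModule.lowerCentralSeries k g g i)
    (mul : (g ⧸ I) →ₗ[k] (g ⧸ I) →ₗ[k] (g ⧸ I))
    (hL : ∀ x y z : g ⧸ I, mul x (mul y z) = mul y (mul x z))
    (hR : ∀ x y z : g ⧸ I, mul (mul x y) z = mul (mul x z) y)
    (hcompat : ∀ x y : g ⧸ I, mul x y - mul y x = ⁅x, y⁆)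
    (hsub : ∀ x y : g ⧸ I, mul x y ∈
      Submodule.span k {z : g ⧸ I | ∃ a b : g ⧸ I, z = ⁅a, b⁆}) :
    ∃ mul' : g →ₗ[k] g →ₗ[k] g,
      (∀ x y z : g, mul' x (mul' y z) = mul' y (mul' x z)) ∧
      (∀ x y z : g, mul' (mul' x y) z = mul' (mul' x z) y) ∧
      (∀ x y : g, mul' x y - mul' y x = ⁅x, y⁆) :=
  lr_lifting_general h2 I hI mul hL hR hcompat hsub
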